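/- arXiv:2407.19215 — 6 statements merged into one kernel-verified Lean document; each statement's English description precedes it below -/
import Mathlib

section
/- Let n, s, k be integers with 1 ≤ k, 2k ≤ s ≤ n. Then (as real numbers) C(n, s) ≤ C(n − k, s − k) · (n/s)^k · e^{k²/s}, i.e. the ratio C(n,s)/C(n−k,s−k) is at most (n/s)^k · e^{k²/s}. -/
/-- Key numeric estimate: for `0 ≤ K`, `2K+2 ≤ S`, `S/(S-K) ≤ exp((2K+1)/S)`. -/
lemma key_exp (S K : ℝ) (hK : 0 ≤ K) (h : 2*K + 2 ≤ S) :
    S/(S-K) ≤ Real.exp ((2*K+1)/S) := by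
  have hS : 0 < S := by linarith
  have hSK : 0 < S - K := by linarith
  have h1 : S/(S-K) ≤ (S + 2*K)/S := by
    rw [div_le_div_iff₀ hSK hS]
    nlinarith
  have h1' : (S + 2*K)/S = 1 + 2*K/S := by field_simp
  have h2 : (1 : ℝ) + 2*K/S ≤ Real.exp (2*K/S) := by
    have := Real.add_one_le_exp (2*K/S); linarith
  have h3 : Real.exp (2*K/S) ≤ Real.exp ((2*K+1)/S) := by
    apply Real.exp_le_exp.mpr
    gcongr
    linarith
  calc S/(S-K) ≤ (S + 2*K)/S := h1
    _ = 1 + 2*K/S := h1'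
    _ ≤ Real.exp (2*K/S) := h2
    _ ≤ Real.exp ((2*K+1)/S) := h3

lemma choose_aux (n s : ℕ) (hsn : s ≤ n) : ∀ k, 2*k ≤ s →
    (n.choose s : ℝ) ≤ ((n - k).choose (s - k) : ℝ) * ((n : ℝ) / s)^k *
      Real.exp ((k : ℝ)^2 / s) := by
  intro k
  induction k with
  | zero => simp
  | succ k ih =>
    intro h
    have hks : 2*k ≤ s := by omega
    have ihk := ih hks
    have hs0 : 0 < s := by omega
    have hS : (0:ℝ) < s := by exact_mod_cast hs0
    have hN : (0:ℝ) < n := by exact_mod_cast (lt_of_lt_of_le hs0 hsn)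
    have hid : (n - k) * (n - k - 1).choose (s - k - 1) = (n - k).choose (s - k) * (s - k) := by
      have h1 : n - k - 1 + 1 = n - k := by omega
      have h2 : s - k - 1 + 1 = s - k := by omega
      have := Nat.add_one_mul_choose_eq (n - k - 1) (s - k - 1)
      simp only [Nat.succ_eq_add_one, h1, h2] at this
      exact this
    have hcast : ((n : ℝ) - k) * ((n - k - 1).choose (s - k - 1) : ℝ)
        = ((n - k).choose (s - k) : ℝ) * ((s : ℝ) - k) := by
      have := congrArg (Nat.cast : ℕ → ℝ) hid
      push_cast [Nat.cast_sub (by omega : k ≤ n), Nat.cast_sub (by omega : k ≤ s)] at this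
      convert this using 2 <;>
        push_cast [Nat.cast_sub (by omega : k ≤ n), Nat.cast_sub (by omega : k ≤ s)] <;> ring
    have hSK : (0:ℝ) < (s : ℝ) - k := by
      have : (k:ℝ) + 2 ≤ s := by exact_mod_cast (by omega : k + 2 ≤ s)
      linarith
    have hNK : (0:ℝ) ≤ (n:ℝ) - k := by
      have : (k:ℝ) ≤ n := by exact_mod_cast (by omega : k ≤ n)
      linarith
    have hstep : ((n - k).choose (s - k) : ℝ) ≤
        ((n - (k+1)).choose (s - (k+1)) : ℝ) * ((n:ℝ)/s) * Real.exp ((2*(k:ℝ)+1)/s) := by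
      have heq : ((n - k).choose (s - k) : ℝ)
          = ((n - k - 1).choose (s - k - 1) : ℝ) * (((n:ℝ) - k) / ((s:ℝ) - k)) := by
        field_simp
        linarith [hcast]
      rw [heq]
      have hsub1 : n - (k+1) = n - k - 1 := by omega
      have hsub2 : s - (k+1) = s - k - 1 := by omega
      rw [hsub1, hsub2, mul_assoc]
      apply mul_le_mul_of_nonneg_left _ (by positivity)
      have hr1 : ((n:ℝ) - k) / ((s:ℝ) - k) ≤ (n:ℝ) / ((s:ℝ) - k) := by
        gcongr
        linarith [Nat.cast_nonneg (α := ℝ) k]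
      have hr2 : (n:ℝ) / ((s:ℝ) - k) = ((n:ℝ)/s) * ((s:ℝ)/((s:ℝ)-k)) := by
        field_simp
      have hr3 : (s:ℝ)/((s:ℝ)-k) ≤ Real.exp ((2*(k:ℝ)+1)/s) := by
        apply key_exp
        · positivity
        · have : 2*k + 2 ≤ s := by omega
          exact_mod_cast this
      calc ((n:ℝ) - k) / ((s:ℝ) - k) ≤ (n:ℝ) / ((s:ℝ) - k) := hr1
        _ = ((n:ℝ)/s) * ((s:ℝ)/((s:ℝ)-k)) := hr2
        _ ≤ ((n:ℝ)/s) * Real.exp ((2*(k:ℝ)+1)/s) :=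
            mul_le_mul_of_nonneg_left hr3 (by positivity)
    have hexp : Real.exp ((2*(k:ℝ)+1)/s) * Real.exp ((k:ℝ)^2/s)
        = Real.exp (((k:ℝ)+1)^2/s) := by
      rw [← Real.exp_add]; congr 1; field_simp; ring
    calc (n.choose s : ℝ) ≤ ((n - k).choose (s - k) : ℝ) * ((n : ℝ) / s)^k *
          Real.exp ((k : ℝ)^2 / s) := ihk
      _ ≤ (((n - (k+1)).choose (s - (k+1)) : ℝ) * ((n:ℝ)/s) * Real.exp ((2*(k:ℝ)+1)/s))
            * ((n : ℝ) / s)^k * Real.exp ((k : ℝ)^2 / s) := by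
          apply mul_le_mul_of_nonneg_right _ (Real.exp_pos _).le
          exact mul_le_mul_of_nonneg_right hstep (by positivity)
      _ = ((n - (k+1)).choose (s - (k+1)) : ℝ) * (((n:ℝ)/s)^k * ((n:ℝ)/s))
            * (Real.exp ((2*(k:ℝ)+1)/s) * Real.exp ((k:ℝ)^2/s)) := by ring
      _ = ((n - (k+1)).choose (s - (k+1)) : ℝ) * ((n : ℝ) / s)^(k+1) *
          Real.exp ((((k:ℕ)+1 : ℕ) : ℝ)^2 / s) := by
          rw [hexp, ← pow_succ]
          push_cast
          ring

/-- For integers `1 ≤ k`, `2k ≤ s ≤ n`, the ratio of binomial coefficients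
satisfies `C(n,s) ≤ C(n−k, s−k) · (n/s)^k · e^{k²/s}`. -/
theorem choose_ratio_le (n s k : ℕ) (hk : 1 ≤ k) (hks : 2*k ≤ s) (hsn : s ≤ n) :
    (n.choose s : ℝ) ≤
      ((n - k).choose (s - k) : ℝ) * ((n : ℝ) / s)^k *
        Real.exp ((k : ℝ)^2 / s) := by
  exact choose_aux n s hsn k hks
end

section
/- Let a, b, q be integers with 1 ≤ q ≤ b ≤ a. Then C(a, q) · (b − q + 1)^q ≤ C(b, q) · (a − q + 1)^q; equivalently, C(a,q)/C(b,q) ≤ ((a − q + 1)/(b − q + 1))^q. -/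
/-- For integers `1 ≤ q ≤ b ≤ a`, `C(a,q) · (b − q + 1)^q ≤ C(b,q) · (a − q + 1)^q`,
i.e. `C(a,q)/C(b,q) ≤ ((a − q + 1)/(b − q + 1))^q`. -/
theorem choose_ratio_pow_le (a b q : ℕ) (hq : 1 ≤ q) (hqb : q ≤ b) (hba : b ≤ a) :
    a.choose q * (b - q + 1)^q ≤ b.choose q * (a - q + 1)^q := by
  have hqa : q ≤ a := le_trans hqb hba
  have key : a.descFactorial q * (b - q + 1)^q ≤ b.descFactorial q * (a - q + 1)^q := by
    rw [Nat.descFactorial_eq_prod_range, Nat.descFactorial_eq_prod_range]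
    have h1 : (∏ i ∈ Finset.range q, (a - i)) * (b - q + 1)^q
        = ∏ i ∈ Finset.range q, (a - i) * (b - q + 1) := by
      simp [Finset.prod_mul_distrib]
    have h2 : (∏ i ∈ Finset.range q, (b - i)) * (a - q + 1)^q
        = ∏ i ∈ Finset.range q, (b - i) * (a - q + 1) := by
      simp [Finset.prod_mul_distrib]
    rw [h1, h2]
    apply Finset.prod_le_prod'
    intro i hi
    have hiq : i < q := Finset.mem_range.mp hi
    have hib : i ≤ b := le_trans hiq.le hqb
    have hia : i ≤ a := le_trans hib hba
    zify [hib, hia, hqa, hqb]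
    nlinarith [mul_nonneg (by omega : (0:ℤ) ≤ (q : ℤ) - 1 - i) (by omega : (0:ℤ) ≤ (a:ℤ) - b)]
  rw [Nat.descFactorial_eq_factorial_mul_choose, Nat.descFactorial_eq_factorial_mul_choose,
    mul_assoc, mul_assoc] at key
  exact Nat.le_of_mul_le_mul_left key (Nat.factorial_pos q)
end

section
/- Let m ≥ 2 and 1 ≤ q ≤ m − 1 be integers, and let W ⊆ [m] with 1 ≤ |W| ≤ m − 1. Then the number of q-element subsets T of [m] with |T ∩ W| even is at least C(m − 2, q − 1), and likewise the number of q-element subsets T with |T ∩ W| odd is at least C(m − 2, q − 1). Moreover, m² · C(m − 2, q − 1) ≥ q · C(m, q), so each of these two families contains at least a q/m² fraction of all C(m, q) subsets. -/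
/-!
Fix `w ∈ W` and `v ∉ W`. Every `(q-1)`-subset `S` of the other `m - 2` points extends to the
`q`-sets `S ∪ {v}` and `S ∪ {w}`, whose intersections with `W` have consecutive sizes
`|S ∩ W|` and `|S ∩ W| + 1`; so one of them is even and the other odd, and `S` is recovered from
either extension by deleting `v` and `w`. The density bound is the identity
`q C(m, q) = m C(m-1, q-1)` together with `C(m-1, q-1) ≤ (m-1) C(m-2, q-1)`.
-/

open Finset

namespace Finset

variable {α : Type*} [Fintype α] [DecidableEq α]

theorem choose_le_card_filter_card_inter {W : Finset α} {w v : α} (hw : w ∈ W) (hv : v ∉ W)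
    (p : ℕ → Prop) [DecidablePred p] (hp : ∀ n, ¬ p n → p (n + 1)) (k : ℕ) :
    (Fintype.card α - 2).choose k ≤ #{T : Finset α | #T = k + 1 ∧ p #(T ∩ W)} := by
  have hwv : w ≠ v := ne_of_mem_of_not_mem hw hv
  set U : Finset α := {w, v}ᶜ
  have hcardU : #U = Fintype.card α - 2 := by rw [card_compl, card_pair hwv]
  let extend (S : Finset α) : Finset α := insert (if p #(S ∩ W) then v else w) S
  have extend_inter_U {S : Finset α} (hS : S ⊆ U) : extend S ∩ U = S := by
    rw [insert_inter_of_notMem (by split_ifs <;> simp [U]), inter_eq_left.mpr hS]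
  rw [← hcardU, ← card_powersetCard]
  refine card_le_card_of_injOn extend (fun S hS => ?_) (fun S₁ hS₁ S₂ hS₂ h => ?_)
  · obtain ⟨hSU, hScard⟩ := mem_powersetCard.mp hS
    have hvS : v ∉ S := fun h => by simpa [U] using hSU h
    have hwS : w ∉ S := fun h => by simpa [U] using hSU h
    simp only [coe_filter, mem_univ, true_and, Set.mem_ofPred_eq, extend]
    split_ifs with hpS
    · exact ⟨by rw [card_insert_of_notMem hvS, hScard], by rwa [insert_inter_of_notMem hv]⟩
    · refine ⟨by rw [card_insert_of_notMem hwS, hScard], ?_⟩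
      rw [insert_inter_of_mem hw, card_insert_of_notMem fun h => hwS (mem_inter.mp h).1]
      exact hp _ hpS
  · rw [← extend_inter_U (mem_powersetCard.mp hS₁).1, h,
      extend_inter_U (mem_powersetCard.mp hS₂).1]

end Finset

namespace Nat

theorem succ_choose_le_succ_mul_choose {n k : ℕ} (hk : k ≤ n) :
    (n + 1).choose k ≤ (n + 1) * n.choose k := by
  calc (n + 1).choose k ≤ (n + 1).choose k * (n + 1 - k) := Nat.le_mul_of_pos_right _ (by omega)
    _ = (n + 1) * n.choose k := by rw [← choose_mul_succ_eq, mul_comm]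

theorem succ_mul_choose_le_sq_mul_choose {n k : ℕ} (hk : k ≤ n) :
    (k + 1) * (n + 2).choose (k + 1) ≤ (n + 2) ^ 2 * n.choose k :=
  calc (k + 1) * (n + 2).choose (k + 1) = (n + 2) * (n + 1).choose k := by
        rw [add_one_mul_choose_eq, mul_comm]
    _ ≤ (n + 2) * ((n + 1) * n.choose k) := Nat.mul_le_mul_left _ (succ_choose_le_succ_mul_choose hk)
    _ ≤ (n + 2) ^ 2 * n.choose k := by rw [← mul_assoc, sq]; gcongr; omega

end Nat

/-- For `m ≥ 2`, `1 ≤ q ≤ m − 1` and `W ⊆ [m]` with `1 ≤ |W| ≤ m − 1`: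
the number of `q`-subsets `T` of `[m]` with `|T ∩ W|` even is at least
`C(m−2, q−1)`, likewise for `|T ∩ W|` odd, and moreover
`m² · C(m−2, q−1) ≥ q · C(m, q)`. -/
theorem many_even_and_odd_intersections (m q : ℕ) (hm : 2 ≤ m)
    (hq1 : 1 ≤ q) (hq2 : q ≤ m - 1)
    (W : Finset (Fin m)) (hW1 : 1 ≤ W.card) (hW2 : W.card ≤ m - 1) :
    (m - 2).choose (q - 1) ≤
        (Finset.univ.filter
          (fun T : Finset (Fin m) => T.card = q ∧ Even ((T ∩ W).card))).card ∧
    (m - 2).choose (q - 1) ≤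
        (Finset.univ.filter
          (fun T : Finset (Fin m) => T.card = q ∧ Odd ((T ∩ W).card))).card ∧
    q * m.choose q ≤ m^2 * (m - 2).choose (q - 1) := by
  obtain ⟨n, rfl⟩ := Nat.exists_eq_add_of_le' hm
  obtain ⟨k, rfl⟩ := Nat.exists_eq_add_of_le' hq1
  obtain ⟨w, hw⟩ := card_pos.mp hW1
  obtain ⟨v, hv⟩ : ∃ v, v ∉ W := by
    by_contra! h
    rw [eq_univ_of_forall h, card_univ, Fintype.card_fin] at hW2
    omega
  have hcard : Fintype.card (Fin (n + 2)) - 2 = n := by simp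
  simp only [Nat.add_sub_cancel]
  refine ⟨?_, ?_, Nat.succ_mul_choose_le_sq_mul_choose (by omega)⟩
  · simpa only [hcard] using choose_le_card_filter_card_inter hw hv Even
      (fun _ => Nat.even_add_one.mpr) k
  · simpa only [hcard] using choose_le_card_filter_card_inter hw hv Odd
      (fun _ => Nat.odd_add_one.mpr) k
end

section
/- Let n be a positive integer, let 0 < α < 1/2, and let j, u be integers with 0 ≤ j ≤ u ≤ n. Then Pr[B(n, 1/2) ≥ u] · Pr[B(n, 1/2 + α) = j] ≤ Pr[B(n, 1/2 + α) ≥ u] · Pr[B(n, 1/2) = j]. In particular, the quantity r = Pr[B(n,1/2) ≥ u] / Pr[B(n,1/2+α) ≥ u] satisfies r · Pr[B(n,1/2+α)=j] / Pr[B(n,1/2)=j] ≤ 1 for every j ≤ u. -/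
lemma binom_core_aux (α : ℝ) (h0 : 0 < α) (h1 : α < 1/2) (j i n : ℕ)
    (hji : j ≤ i) (hin : i ≤ n) :
    (1/2 + α)^j * (1/2 - α)^(n-j) ≤ (1/2 + α)^i * (1/2 - α)^(n-i) := by
  obtain ⟨d, rfl⟩ := Nat.exists_eq_add_of_le hji
  have hnj : n - j = (n - (j+d)) + d := by omega
  rw [hnj, pow_add, pow_add]
  have h2 : (0:ℝ) ≤ 1/2 - α := by linarith
  have h3 : (1/2 - α : ℝ)^d ≤ (1/2+α)^d := pow_le_pow_left₀ h2 (by linarith) d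
  have h4 : (0:ℝ) ≤ (1/2+α)^j := by positivity
  have h5 : (0:ℝ) ≤ (1/2-α)^(n-(j+d)) := pow_nonneg h2 _
  nlinarith [mul_nonneg h4 h5]

/-- For `0 ≤ j ≤ u ≤ n` and `0 < α < 1/2`,
`Pr[B(n,1/2) ≥ u] · Pr[B(n,1/2+α) = j] ≤ Pr[B(n,1/2+α) ≥ u] · Pr[B(n,1/2) = j]`;
in particular `r = Pr[B(n,1/2) ≥ u]/Pr[B(n,1/2+α) ≥ u]` satisfies
`r · Pr[B(n,1/2+α)=j]/Pr[B(n,1/2)=j] ≤ 1` for every `j ≤ u`. -/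
theorem binomial_tail_ratio_le (n : ℕ) (hn : 1 ≤ n) (α : ℝ)
    (h0 : 0 < α) (h1 : α < 1/2) (j u : ℕ) (hj : j ≤ u) (hu : u ≤ n) :
    (∑ i ∈ Finset.Icc u n, (n.choose i : ℝ) * (1/2)^i * (1/2)^(n - i)) *
        ((n.choose j : ℝ) * (1/2 + α)^j * (1/2 - α)^(n - j)) ≤
      (∑ i ∈ Finset.Icc u n, (n.choose i : ℝ) * (1/2 + α)^i * (1/2 - α)^(n - i)) *
        ((n.choose j : ℝ) * (1/2)^j * (1/2)^(n - j)) := by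
  rw [Finset.sum_mul, Finset.sum_mul]
  apply Finset.sum_le_sum
  intro i hi
  rw [Finset.mem_Icc] at hi
  have hji : j ≤ i := le_trans hj hi.1
  have hin : i ≤ n := hi.2
  have e1 : (1/2:ℝ)^i * (1/2)^(n-i) = (1/2)^n := by rw [← pow_add]; congr 1; omega
  have e2 : (1/2:ℝ)^j * (1/2)^(n-j) = (1/2)^n := by rw [← pow_add]; congr 1; omega
  have key := binom_core_aux α h0 h1 j i n hji hin
  have hC : (0:ℝ) ≤ (n.choose i : ℝ) * (n.choose j : ℝ) * (1/2)^n := by positivity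
  calc (n.choose i : ℝ) * (1/2)^i * (1/2)^(n-i) * ((n.choose j : ℝ) * (1/2 + α)^j * (1/2 - α)^(n-j))
      = (n.choose i : ℝ) * (n.choose j : ℝ) * (1/2)^n * ((1/2 + α)^j * (1/2 - α)^(n-j)) := by
        rw [← e1]; ring
    _ ≤ (n.choose i : ℝ) * (n.choose j : ℝ) * (1/2)^n * ((1/2 + α)^i * (1/2 - α)^(n-i)) :=
        mul_le_mul_of_nonneg_left key hC
    _ = (n.choose i : ℝ) * (1/2 + α)^i * (1/2 - α)^(n-i) * ((n.choose j : ℝ) * (1/2)^j * (1/2)^(n-j)) := by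
        rw [← e2]; ring
end

section
/- Let n ≥ 3 be an integer, let 0 < α < 1/2, and let u be an integer with n/2 + √n + αn < u ≤ n. Then ∑_{i=u}^{n} C(n,i) (1/2 − α)^{n−i} (1/2 + α)^{i} ≤ √n · C(n,u) (1/2 − α)^{n−u} (1/2 + α)^{u}, i.e. Pr[B(n, 1/2 + α) ≥ u] ≤ √n · Pr[B(n, 1/2 + α) = u]. -/
/-!
Above `n p + √n` the ratio `(n - i) p / ((i + 1) q)` of consecutive binomial terms is at most
`1 - 1/√n`, so the tail is dominated by a geometric series of ratio `1 - 1/√n`, whose sum is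
`√n` times its first term.
-/

open Finset

theorem one_sub_mul_sum_Icc_add_mul_le {R : Type*} [CommRing R] [LinearOrder R]
    [IsStrictOrderedRing R] {f : ℕ → R} {r : R} {u n : ℕ} (hun : u ≤ n)
    (hf : ∀ i, u ≤ i → i < n → f (i + 1) ≤ r * f i) :
    (1 - r) * ∑ i ∈ Icc u n, f i + r * f n ≤ f u := by
  induction n, hun using Nat.le_induction with
  | base => simp only [Icc_self, sum_singleton]; exact le_of_eq (by ring)
  | succ n hun ih =>
    rw [sum_Icc_succ_top (by omega)]
    have hstep := hf n hun n.lt_succ_self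
    have ih' := ih fun i hui hin => hf i hui (by omega)
    linear_combination ih' + hstep

/-- `Pr[B(n, p) = i]` when `q = 1 - p`. -/
noncomputable def binomialTerm (n : ℕ) (p q : ℝ) (i : ℕ) : ℝ :=
  n.choose i * q ^ (n - i) * p ^ i

theorem binomialTerm_nonneg {n : ℕ} {p q : ℝ} (hp : 0 ≤ p) (hq : 0 ≤ q) (i : ℕ) :
    0 ≤ binomialTerm n p q i := by
  unfold binomialTerm; positivity

theorem succ_mul_binomialTerm_succ {n i : ℕ} (p q : ℝ) (hin : i < n) :
    (i + 1) * q * binomialTerm n p q (i + 1) = (n - i) * p * binomialTerm n p q i := by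
  have hchoose : (n.choose (i + 1) : ℝ) * (i + 1) = n.choose i * (n - i) := by
    rw [← Nat.cast_sub hin.le]; exact_mod_cast Nat.choose_succ_right_eq n i
  have hq : q ^ (n - i) = q ^ (n - (i + 1)) * q := by
    rw [← pow_succ]; congr 1; omega
  unfold binomialTerm
  rw [hq, pow_succ]
  linear_combination q ^ (n - (i + 1)) * q * p ^ i * p * hchoose

theorem binomialTerm_succ_le {n i : ℕ} {p q : ℝ} (hp : 0 ≤ p) (hq : 0 < q) (hpq : p + q = 1)
    (hi : n * p + √n < i) (hin : i < n) :
    binomialTerm n p q (i + 1) ≤ (1 - (√n)⁻¹) * binomialTerm n p q i := by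
  set s := √n
  have hs2 : (n : ℝ) = s ^ 2 := (Real.sq_sqrt n.cast_nonneg).symm
  have hs1 : 1 ≤ s := Real.one_le_sqrt.2 (by exact_mod_cast (show 1 ≤ n by omega))
  obtain rfl : q = 1 - p := by linarith
  have hratio : (n - i) * p * s ≤ (s - 1) * (i + 1) * (1 - p) := by
    rw [hs2] at hi ⊢
    -- with `δ = i - n p - s > 0`, the difference of the two sides is
    -- `(s² - 1)(1 - p q) + (s - 1) δ + p δ + p²`
    have hδ : (0 : ℝ) ≤ i - s ^ 2 * p - s := by linarith
    have hsq : (0 : ℝ) ≤ s ^ 2 - 1 := by nlinarith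
    nlinarith [mul_nonneg hsq (by nlinarith : 0 ≤ 1 - p * (1 - p)),
      mul_nonneg (sub_nonneg.2 hs1) hδ, mul_nonneg hp hδ]
  have hratio' : (n - i) * p ≤ (1 - s⁻¹) * ((i + 1) * (1 - p)) := by
    calc (n - i) * p = (n - i) * p * s / s := by field_simp
      _ ≤ (s - 1) * (i + 1) * (1 - p) / s := by gcongr
      _ = (1 - s⁻¹) * ((i + 1) * (1 - p)) := by field_simp
  refine le_of_mul_le_mul_left ?_ (by positivity : (0 : ℝ) < (i + 1) * (1 - p))
  calc (i + 1) * (1 - p) * binomialTerm n p (1 - p) (i + 1)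
      = (n - i) * p * binomialTerm n p (1 - p) i := succ_mul_binomialTerm_succ p (1 - p) hin
    _ ≤ (1 - s⁻¹) * ((i + 1) * (1 - p)) * binomialTerm n p (1 - p) i :=
      mul_le_mul_of_nonneg_right hratio' (binomialTerm_nonneg hp hq.le i)
    _ = (i + 1) * (1 - p) * ((1 - s⁻¹) * binomialTerm n p (1 - p) i) := by ring

theorem sum_Icc_binomialTerm_le_sqrt_mul {n u : ℕ} {p q : ℝ} (hp : 0 ≤ p) (hq : 0 < q)
    (hpq : p + q = 1) (hu : n * p + √n < u) (hun : u ≤ n) :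
    ∑ i ∈ Icc u n, binomialTerm n p q i ≤ √n * binomialTerm n p q u := by
  have hu0 : (0 : ℝ) < u := by nlinarith [Real.sqrt_nonneg n, mul_nonneg n.cast_nonneg hp]
  have hs1 : 1 ≤ √n :=
    Real.one_le_sqrt.2 (Nat.one_le_cast.2 ((Nat.cast_pos.1 hu0).trans_le hun))
  have key := one_sub_mul_sum_Icc_add_mul_le hun fun i hui hin =>
    binomialTerm_succ_le hp hq hpq (hu.trans_le (by exact_mod_cast hui)) hin
  rw [sub_sub_cancel] at key
  have htop : 0 ≤ (1 - (√n)⁻¹) * binomialTerm n p q n :=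
    mul_nonneg (sub_nonneg.2 (inv_le_one_of_one_le₀ hs1)) (binomialTerm_nonneg hp hq.le n)
  calc ∑ i ∈ Icc u n, binomialTerm n p q i
      = √n * ((√n)⁻¹ * ∑ i ∈ Icc u n, binomialTerm n p q i) := by field_simp
    _ ≤ √n * binomialTerm n p q u := by gcongr; linarith

theorem binomial_tail_le_sqrt_mul_point_general (n : ℕ) (α : ℝ)
    (h0 : 0 < α) (h1 : α < 1/2) (u : ℕ)
    (hu1 : (n:ℝ)/2 + Real.sqrt n + α * n < u) (hu2 : u ≤ n) :
    ∑ i ∈ Finset.Icc u n, (n.choose i : ℝ) * (1/2 - α)^(n - i) * (1/2 + α)^i ≤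
      Real.sqrt n * ((n.choose u : ℝ) * (1/2 - α)^(n - u) * (1/2 + α)^u) :=
  sum_Icc_binomialTerm_le_sqrt_mul (p := 1/2 + α) (by linarith) (by linarith) (by ring)
    (by linarith) hu2

/-- For `n ≥ 3`, `0 < α < 1/2` and `n/2 + √n + αn < u ≤ n`,
`Pr[B(n,1/2+α) ≥ u] ≤ √n · Pr[B(n,1/2+α) = u]`. -/
theorem binomial_tail_le_sqrt_mul_point (n : ℕ) (hn : 3 ≤ n) (α : ℝ)
    (h0 : 0 < α) (h1 : α < 1/2) (u : ℕ)
    (hu1 : (n:ℝ)/2 + Real.sqrt n + α * n < u) (hu2 : u ≤ n) :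
    ∑ i ∈ Finset.Icc u n, (n.choose i : ℝ) * (1/2 - α)^(n - i) * (1/2 + α)^i ≤
      Real.sqrt n * ((n.choose u : ℝ) * (1/2 - α)^(n - u) * (1/2 + α)^u) :=
  binomial_tail_le_sqrt_mul_point_general n α h0 h1 u hu1 hu2
end

section
/- Let n ≥ 3 be an integer, let 0 < α < 1/2, and let u be an integer with n/2 + √n + αn < u ≤ n. Then Pr[B(n, 1/2) ≥ u] / Pr[B(n, 1/2 + α) ≥ u] ≥ 1 / ((1 + 2α)^{2u−n} · √n), i.e. √n · (1 + 2α)^{2u−n} · Pr[B(n, 1/2) ≥ u] ≥ Pr[B(n, 1/2 + α) ≥ u]. -/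
set_option maxHeartbeats 1000000 in
/-- For `n ≥ 3`, `0 < α < 1/2` and `n/2 + √n + αn < u ≤ n`,
`Pr[B(n,1/2) ≥ u] / Pr[B(n,1/2+α) ≥ u] ≥ 1/((1+2α)^{2u−n} √n)`, i.e.
`√n · (1+2α)^{2u−n} · Pr[B(n,1/2) ≥ u] ≥ Pr[B(n,1/2+α) ≥ u]`. -/
theorem binomial_tail_ratio_ge (n : ℕ) (hn : 3 ≤ n) (α : ℝ)
    (h0 : 0 < α) (h1 : α < 1/2) (u : ℕ)
    (hu1 : (n:ℝ)/2 + Real.sqrt n + α * n < u) (hu2 : u ≤ n) :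
    ∑ i ∈ Finset.Icc u n, (n.choose i : ℝ) * (1/2 + α)^i * (1/2 - α)^(n - i) ≤
      Real.sqrt n * (1 + 2*α)^(2*u - n) *
        ∑ i ∈ Finset.Icc u n, (n.choose i : ℝ) * (1/2)^i * (1/2)^(n - i) := by
  have hnpos : 0 < n := by omega
  have hn0 : (0:ℝ) < n := by exact_mod_cast hnpos
  have hsq : 0 < Real.sqrt n := Real.sqrt_pos.mpr hn0
  have hαn : 0 < α * n := by positivity
  have hun2 : (n:ℝ) < 2 * u := by nlinarith
  have hun : n < 2 * u := by exact_mod_cast hun2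
  have huN : (u:ℝ) ≤ n := by exact_mod_cast hu2
  set β : ℝ := 1/2 + α with hβdef
  set γ : ℝ := 1/2 - α with hγdef
  have hβ0 : 0 < β := by rw [hβdef]; linarith
  have hγ0 : 0 < γ := by rw [hγdef]; linarith
  have hγh : γ ≤ 1/2 := by rw [hγdef]; linarith
  have hnum0 : ((u:ℝ)+1)*γ - ((n:ℝ)-u)*β = ((u:ℝ) - (n:ℝ)/2 - α*(n:ℝ)) + (1/2 - α) := by
    rw [hβdef, hγdef]; ring
  clear_value β γ
  set t : ℕ → ℝ := fun i => (n.choose i : ℝ) * β^i * γ^(n-i) with ht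
  set r : ℝ := ((n:ℝ) - u) * β / (((u:ℝ)+1) * γ) with hrdef
  clear_value r
  have hden : 0 < ((u:ℝ)+1) * γ := by
    apply mul_pos _ hγ0; positivity
  have hnu0 : (0:ℝ) ≤ (n:ℝ) - u := by linarith
  have hr0 : 0 ≤ r := by
    rw [hrdef]
    exact div_nonneg (mul_nonneg hnu0 hβ0.le) hden.le
  -- 1 - r ≥ 1/√n
  have hnum : Real.sqrt n < ((u:ℝ)+1)*γ - ((n:ℝ)-u)*β := by
    rw [hnum0]; linarith
  have hdle : ((u:ℝ)+1)*γ ≤ n := by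
    have h3 : (3:ℝ) ≤ n := by exact_mod_cast hn
    have hm : ((u:ℝ)+1)*γ ≤ ((n:ℝ)+1)*(1/2) :=
      mul_le_mul (by linarith) hγh hγ0.le (by linarith)
    linarith
  have hsqn : Real.sqrt n * Real.sqrt n = n := Real.mul_self_sqrt hn0.le
  have h1r : 1/Real.sqrt n ≤ 1 - r := by
    have h1 : 1 - r = (((u:ℝ)+1)*γ - ((n:ℝ)-u)*β) / (((u:ℝ)+1)*γ) := by
      rw [hrdef]; field_simp
    rw [h1, div_le_div_iff₀ hsq hden]
    nlinarith
  have hr1 : r < 1 := by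
    have : 0 < 1/Real.sqrt n := by positivity
    linarith
  have hr1' : (0:ℝ) < 1 - r := by
    have : 0 < 1/Real.sqrt n := by positivity
    linarith
  -- step inequality
  have hstep : ∀ i, u ≤ i → i < n → t (i+1) ≤ r * t i := by
    intro i hui hin
    have hc : ((n.choose (i+1)) : ℝ) * ((i:ℝ)+1) = (n.choose i : ℝ) * ((n:ℝ) - i) := by
      have h2 : ((n.choose (i+1) * (i+1) : ℕ) : ℝ) = ((n.choose i * (n - i) : ℕ) : ℝ) := by
        exact_mod_cast congrArg (Nat.cast (R := ℝ)) (Nat.choose_succ_right_eq n i)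
      push_cast [Nat.cast_sub hin.le] at h2
      linarith
    have hir : (u:ℝ) ≤ i := by exact_mod_cast hui
    have hC0 : (0:ℝ) ≤ n.choose i := by positivity
    have hC1 : (0:ℝ) ≤ n.choose (i+1) := by positivity
    have hiu : (0:ℝ) ≤ (i:ℝ) - u := by linarith
    have h4 : (n.choose (i+1):ℝ) * ((u:ℝ)+1) ≤ (n.choose i:ℝ) * ((n:ℝ)-u) := by
      linarith [hc, mul_nonneg hC0 hiu, mul_nonneg hC1 hiu]
    have key : (n.choose (i+1):ℝ)*β ≤ r * ((n.choose i:ℝ) * γ) := by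
      rw [hrdef, div_mul_eq_mul_div, le_div_iff₀ hden]
      calc (n.choose (i+1):ℝ)*β*(((u:ℝ)+1)*γ)
          = ((n.choose (i+1):ℝ)*((u:ℝ)+1))*(β*γ) := by ring
        _ ≤ ((n.choose i:ℝ)*((n:ℝ)-u))*(β*γ) :=
            mul_le_mul_of_nonneg_right h4 (mul_pos hβ0 hγ0).le
        _ = ((n:ℝ)-u)*β*((n.choose i:ℝ)*γ) := by ring
    have hni : n - i = (n - (i+1)) + 1 := by omega
    calc t (i+1) = ((n.choose (i+1):ℝ)*β) * (β^i * γ^(n-(i+1))) := by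
          show (n.choose (i+1):ℝ) * β^(i+1) * γ^(n-(i+1)) = _
          rw [pow_succ]; ring
      _ ≤ (r * ((n.choose i:ℝ) * γ)) * (β^i * γ^(n-(i+1))) :=
          mul_le_mul_of_nonneg_right key
            (mul_nonneg (pow_nonneg hβ0.le _) (pow_nonneg hγ0.le _))
      _ = r * t i := by
          show _ = r * ((n.choose i:ℝ) * β^i * γ^(n-i))
          rw [hni, pow_succ]; ring
  -- geometric domination
  have hgeo : ∀ i, u ≤ i → i ≤ n → t i ≤ t u * r^(i-u) := by
    intro i hui
    induction i, hui using Nat.le_induction with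
    | base => intro _; simp
    | succ i hui ih =>
      intro hin
      have hA := ih (by omega)
      have hB := hstep i hui (by omega)
      have he : i + 1 - u = (i - u) + 1 := by omega
      rw [he, pow_succ]
      calc t (i+1) ≤ r * t i := hB
        _ ≤ r * (t u * r^(i-u)) := mul_le_mul_of_nonneg_left hA hr0
        _ = t u * (r^(i-u) * r) := by ring
  have htu0 : 0 ≤ t u := by
    show 0 ≤ (n.choose u : ℝ) * β^u * γ^(n-u)
    exact mul_nonneg (mul_nonneg (by positivity) (pow_nonneg hβ0.le _)) (pow_nonneg hγ0.le _)
  have hsum1 : ∑ i ∈ Finset.Icc u n, t i ≤ t u * ∑ i ∈ Finset.Icc u n, r^(i-u) := by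
    rw [Finset.mul_sum]
    apply Finset.sum_le_sum
    intro i hi
    rw [Finset.mem_Icc] at hi
    exact hgeo i hi.1 hi.2
  have hsum2 : ∑ i ∈ Finset.Icc u n, r^(i-u) ≤ Real.sqrt n := by
    have he : ∑ i ∈ Finset.Icc u n, r^(i-u) = ∑ k ∈ Finset.range (n+1-u), r^k := by
      rw [show Finset.Icc u n = Finset.Ico u (n+1) by rw [Finset.Ico_add_one_right_eq_Icc],
        Finset.sum_Ico_eq_sum_range]
      apply Finset.sum_congr rfl
      intro k _
      congr 1
      omega
    rw [he]
    have hgs : ∑ k ∈ Finset.range (n+1-u), r^k ≤ 1/(1-r) := by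
      rw [geom_sum_eq hr1.ne,
        show r^(n+1-u) - 1 = -(1 - r^(n+1-u)) by ring,
        show r - 1 = -(1-r) by ring, neg_div_neg_eq]
      have hp : 0 ≤ r^(n+1-u) := pow_nonneg hr0 _
      gcongr
      linarith
    have hfin : 1/(1-r) ≤ Real.sqrt n := by
      have h := one_div_le_one_div_of_le (by positivity : (0:ℝ) < 1/Real.sqrt n) h1r
      rwa [one_div_one_div] at h
    linarith
  -- bound on t u
  obtain ⟨a, b, hua, hna⟩ : ∃ a b, u = a + b ∧ n = a + 2*b :=
    ⟨2*u - n, n - u, by omega, by omega⟩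
  have hab : 2*u - n = a := by omega
  have h2α : (0:ℝ) ≤ 1 + 2*α := by linarith
  have htu : t u ≤ (1+2*α)^(2*u-n) * ((n.choose u:ℝ) * (1/2)^n) := by
    show (n.choose u : ℝ) * β^u * γ^(n-u) ≤ _
    have hnu : n - u = b := by omega
    have key2 : ((1+2*α)*(1-2*α))^b ≤ 1 := by
      apply pow_le_one₀ (by nlinarith) (by nlinarith)
    have e : (n.choose u : ℝ) * β^u * γ^(n-u)
        = ((1+2*α)^(2*u-n) * ((n.choose u:ℝ) * (1/2)^n)) * ((1+2*α)*(1-2*α))^b := by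
      rw [hab, hnu, hua, show n = a+b+b by omega, hβdef, hγdef]
      rw [show (1:ℝ)/2 + α = (1+2*α)*(1/2) by ring, show (1:ℝ)/2 - α = (1-2*α)*(1/2) by ring]
      simp only [pow_add, mul_pow]
      ring
    rw [e]
    have hpos : 0 ≤ (1+2*α)^(2*u-n) * ((n.choose u:ℝ) * (1/2)^n) :=
      mul_nonneg (pow_nonneg h2α _) (by positivity)
    calc _ ≤ ((1+2*α)^(2*u-n) * ((n.choose u:ℝ) * (1/2)^n)) * 1 :=
          mul_le_mul_of_nonneg_left key2 hpos
      _ = _ := by ring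
  -- single term lower bound for RHS sum
  have hrhs : (n.choose u:ℝ) * (1/2)^n ≤
      ∑ i ∈ Finset.Icc u n, (n.choose i : ℝ) * (1/2)^i * (1/2)^(n - i) := by
    have hmem : u ∈ Finset.Icc u n := by simp [hu2]
    have h := Finset.single_le_sum (f := fun i => (n.choose i : ℝ) * (1/2)^i * (1/2)^(n-i))
      (fun i _ => by positivity) hmem
    calc (n.choose u:ℝ) * (1/2)^n
        = (n.choose u : ℝ) * (1/2)^u * (1/2)^(n-u) := by
          rw [mul_assoc, ← pow_add]
          congr 2
          omega
      _ ≤ _ := h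
  -- assemble
  have hL : ∑ i ∈ Finset.Icc u n, (n.choose i : ℝ) * β^i * γ^(n - i)
      = ∑ i ∈ Finset.Icc u n, t i := rfl
  rw [hL]
  calc ∑ i ∈ Finset.Icc u n, t i ≤ t u * ∑ i ∈ Finset.Icc u n, r^(i-u) := hsum1
    _ ≤ t u * Real.sqrt n := mul_le_mul_of_nonneg_left hsum2 htu0
    _ ≤ ((1+2*α)^(2*u-n) * ((n.choose u:ℝ) * (1/2)^n)) * Real.sqrt n :=
        mul_le_mul_of_nonneg_right htu hsq.le
    _ ≤ ((1+2*α)^(2*u-n) * ∑ i ∈ Finset.Icc u n, (n.choose i : ℝ) * (1/2)^i * (1/2)^(n - i))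
          * Real.sqrt n := by
        apply mul_le_mul_of_nonneg_right _ hsq.le
        exact mul_le_mul_of_nonneg_left hrhs (pow_nonneg h2α _)
    _ = Real.sqrt n * (1 + 2*α)^(2*u - n) *
        ∑ i ∈ Finset.Icc u n, (n.choose i : ℝ) * (1/2)^i * (1/2)^(n - i) := by ring
end
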